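/- Let f = (f_1,…,f_n) be polynomials in R[x] with each deg f_i ≥ 1, δ_f = Σ_{i=1}^n (deg f_i − 1), and let δ ≥ 0 be an integer. Let L and L' be R-linear functionals on R[x] that both annul (f)^{≤δ_f+δ}_x and that agree on all polynomials of total degree ≤ δ_f + δ. Let F ∈ R[x] with deg F ≤ d, fix monotonous difference derivatives ∇f_i of the f_i and a monotonous difference derivative ∇F of F. Then the polynomials H(x) = L(y_*).det‖∇f ∇F; f(x) F(x)‖ and H'(x) = L'(y_*).det‖∇f ∇F; f(x) F(x)‖ satisfy H'(x) − H(x) ∈ (f)^{≤d−δ−1}_x. -/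

import Mathlib

open MvPolynomial Finset

noncomputable section

variable {R : Type*} [CommRing R] {n : ℕ}

/-- Total degree of a multivariate polynomial, valued in `WithBot ℤ`,
with the convention `deg 0 = ⊥` (i.e. `-∞`). -/
def mdeg {σ S : Type*} [CommSemiring S] (F : MvPolynomial σ S) : WithBot ℤ :=
  F.support.sup fun m => ((m.sum fun _ e => e : ℕ) : ℤ)

/-- The embedding `R[x] → R[x,y]`, `x_i ↦ x_i` (the x-variables are `Sum.inl`,
the y-variables are `Sum.inr`). -/
def toX : MvPolynomial (Fin n) R →ₐ[R] MvPolynomial (Fin n ⊕ Fin n) R :=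
  rename Sum.inl

/-- The embedding `R[x] → R[x,y]`, `x_i ↦ y_i`. -/
def toY : MvPolynomial (Fin n) R →ₐ[R] MvPolynomial (Fin n ⊕ Fin n) R :=
  rename Sum.inr

/-- `D = (∇¹F, …, ∇ⁿF)` is a difference derivative of `F`:
`∑ k, (x_k - y_k) * ∇ᵏF(x,y) = F(x) - F(y)`. -/
def IsDiffDeriv (F : MvPolynomial (Fin n) R)
    (D : Fin n → MvPolynomial (Fin n ⊕ Fin n) R) : Prop :=
  ∑ k : Fin n, (X (Sum.inl k) - X (Sum.inr k)) * D k = toX F - toY F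

/-- A difference derivative of `F` is monotonous if each component has total degree
`≤ deg F - 1` (equivalently `deg (∇ᵏF) + 1 ≤ deg F` in `WithBot ℤ`). -/
def IsMonotonous (F : MvPolynomial (Fin n) R)
    (D : Fin n → MvPolynomial (Fin n ⊕ Fin n) R) : Prop :=
  ∀ k, mdeg (D k) + 1 ≤ mdeg F

/-- `δ_f = ∑ᵢ (deg fᵢ - 1)`. -/
def deltaF (f : Fin n → MvPolynomial (Fin n) R) : ℤ :=
  ∑ i, (((f i).totalDegree : ℤ) - 1)

/-- `(f)^{≤ d}_x`: sums `∑ fᵢ gᵢ` with `deg fᵢ + deg gᵢ ≤ d` for every `i`. -/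
def boundedSpan (f : Fin n → MvPolynomial (Fin n) R) (d : WithBot ℤ) :
    Set (MvPolynomial (Fin n) R) :=
  {F | ∃ g : Fin n → MvPolynomial (Fin n) R,
    F = ∑ i, f i * g i ∧ ∀ i, mdeg (f i) + mdeg (g i) ≤ d}

/-- A linear functional `L` annuls a set `S` if it vanishes on it. -/
def Annuls (L : MvPolynomial (Fin n) R →ₗ[R] R) (S : Set (MvPolynomial (Fin n) R)) : Prop :=
  ∀ F ∈ S, L F = 0

/-- `L(y_*).P` : apply the functional `L` to the `y`-part of `P ∈ R[x,y]`,
i.e. if `P = ∑_α A_α(x) y^α` then `L(y_*).P = ∑_α L(y^α) • A_α(x)`. -/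
def applyY (L : MvPolynomial (Fin n) R →ₗ[R] R) (P : MvPolynomial (Fin n ⊕ Fin n) R) :
    MvPolynomial (Fin n) R :=
  ∑ m ∈ P.support,
    C (L (monomial (Finsupp.sumFinsuppAddEquivProdFinsupp m).2 (1 : R)) * P.coeff m) *
      monomial (Finsupp.sumFinsuppAddEquivProdFinsupp m).1 (1 : R)

/-- `det‖∇f(x,y) ∇F(x,y); f(x) F(x)‖` : the `(n+1) × (n+1)` determinant whose entry `(k,i)`
is `∇ᵏfᵢ(x,y)` for `k, i ≤ n`, entry `(k, n+1)` is `∇ᵏF(x,y)`, entry `(n+1, i)` is `fᵢ(x)`,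
and entry `(n+1, n+1)` is `F(x)`.  Here `Df i` is the tuple `(∇¹fᵢ, …, ∇ⁿfᵢ)`. -/
def ddetX (f : Fin n → MvPolynomial (Fin n) R)
    (Df : Fin n → Fin n → MvPolynomial (Fin n ⊕ Fin n) R)
    (F : MvPolynomial (Fin n) R) (DF : Fin n → MvPolynomial (Fin n ⊕ Fin n) R) :
    MvPolynomial (Fin n ⊕ Fin n) R :=
  Matrix.det (Matrix.of fun k i : Fin (n + 1) =>
    if hk : (k : ℕ) < n then
      if hi : (i : ℕ) < n then Df ⟨i, hi⟩ ⟨k, hk⟩ else DF ⟨k, hk⟩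
    else
      if hi : (i : ℕ) < n then toX (f ⟨i, hi⟩) else toX F)

/-- `det‖∇f(x,y) ∇F(x,y); f(y) F(y)‖` : as `ddetX` but with last row `(f₁(y),…,fₙ(y),F(y))`. -/
def ddetY (f : Fin n → MvPolynomial (Fin n) R)
    (Df : Fin n → Fin n → MvPolynomial (Fin n ⊕ Fin n) R)
    (F : MvPolynomial (Fin n) R) (DF : Fin n → MvPolynomial (Fin n ⊕ Fin n) R) :
    MvPolynomial (Fin n ⊕ Fin n) R :=
  Matrix.det (Matrix.of fun k i : Fin (n + 1) =>
    if hk : (k : ℕ) < n then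
      if hi : (i : ℕ) < n then Df ⟨i, hi⟩ ⟨k, hk⟩ else DF ⟨k, hk⟩
    else
      if hi : (i : ℕ) < n then toY (f ⟨i, hi⟩) else toY F)

/-!
Expanding the determinant along its last row gives `ddetX = ∑ᵢ fᵢ(x) Cᵢ + F(x) C`, where the
cofactors `Cᵢ` and `C` involve only the difference derivatives; by monotonicity
`deg Cᵢ ≤ δ_f + d - deg fᵢ` and `deg C ≤ δ_f`. As `L(y_*)` is `R[x]`-linear,
`H' - H = ∑ᵢ fᵢ · (L' - L)(y_*).Cᵢ + F · (L' - L)(y_*).C`. The functional `L' - L` kills all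
polynomials of degree `≤ δ_f + δ`, so only monomials of `y`-degree `> δ_f + δ` survive in
`(L' - L)(y_*).P`, which therefore has degree `≤ deg P - δ_f - δ - 1`. Hence the last term
vanishes and `deg fᵢ + deg (L' - L)(y_*).Cᵢ ≤ d - δ - 1`.
-/

section Degree

variable {σ S : Type*}

theorem mdeg_le_iff [CommSemiring S] {F : MvPolynomial σ S} {c : WithBot ℤ} :
    mdeg F ≤ c ↔ ∀ m ∈ F.support, ((m.degree : ℤ) : WithBot ℤ) ≤ c :=
  Finset.sup_le_iff

theorem le_mdeg [CommSemiring S] {F : MvPolynomial σ S} {m : σ →₀ ℕ} (hm : m ∈ F.support) :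
    ((m.degree : ℤ) : WithBot ℤ) ≤ mdeg F :=
  mdeg_le_iff.mp le_rfl m hm

theorem eq_zero_of_mdeg_lt_zero [CommSemiring S] {F : MvPolynomial σ S} (hF : mdeg F < 0) :
    F = 0 := by
  by_contra hne
  obtain ⟨m, hm⟩ := support_nonempty.mpr hne
  have := (le_mdeg hm).trans_lt hF
  norm_cast at this

theorem mdeg_monomial_le [CommSemiring S] (u : σ →₀ ℕ) (a : S) :
    mdeg (monomial u a) ≤ ((u.degree : ℤ) : WithBot ℤ) :=
  mdeg_le_iff.mpr fun m hm => by rw [Finset.mem_singleton.mp (support_monomial_subset hm)]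

theorem mdeg_le_totalDegree [CommSemiring S] (F : MvPolynomial σ S) :
    mdeg F ≤ ((F.totalDegree : ℤ) : WithBot ℤ) :=
  mdeg_le_iff.mpr fun _ hm => by exact_mod_cast le_totalDegree hm

theorem mdeg_smul_le [CommSemiring S] {A : Type*} [SMulZeroClass A S] (a : A)
    (F : MvPolynomial σ S) : mdeg (a • F) ≤ mdeg F :=
  Finset.sup_mono support_smul

theorem mdeg_neg [CommRing S] (F : MvPolynomial σ S) : mdeg (-F) = mdeg F := by
  rw [mdeg, mdeg, support_neg]

theorem mdeg_neg_one_pow_mul [CommRing S] (k : ℕ) (F : MvPolynomial σ S) :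
    mdeg ((-1) ^ k * F) = mdeg F := by
  rcases neg_one_pow_eq_or (MvPolynomial σ S) k with h | h <;> simp [h, mdeg_neg]

theorem mdeg_mul_le [CommSemiring S] (P Q : MvPolynomial σ S) :
    mdeg (P * Q) ≤ mdeg P + mdeg Q := by
  classical
  refine mdeg_le_iff.mpr fun m hm => ?_
  obtain ⟨u, hu, v, hv, rfl⟩ := Finset.mem_add.mp (support_mul P Q hm)
  rw [map_add, Nat.cast_add, WithBot.coe_add]
  exact add_le_add (le_mdeg hu) (le_mdeg hv)

theorem mdeg_sum_le [CommSemiring S] {ι : Type*} (s : Finset ι) (P : ι → MvPolynomial σ S)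
    {c : WithBot ℤ} (h : ∀ i ∈ s, mdeg (P i) ≤ c) : mdeg (∑ i ∈ s, P i) ≤ c := by
  classical
  refine mdeg_le_iff.mpr fun m hm => ?_
  obtain ⟨i, hi, hmi⟩ := Finset.mem_biUnion.mp (support_sum hm)
  exact (le_mdeg hmi).trans (h i hi)

theorem mdeg_prod_le [CommSemiring S] {ι : Type*} (s : Finset ι) (P : ι → MvPolynomial σ S) :
    mdeg (∏ i ∈ s, P i) ≤ ∑ i ∈ s, mdeg (P i) := by
  classical
  induction s using Finset.induction_on with
  | empty => simpa using mdeg_monomial_le (0 : σ →₀ ℕ) (1 : S)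
  | insert a s ha ih =>
    rw [prod_insert ha, sum_insert ha]
    exact (mdeg_mul_le _ _).trans (add_le_add le_rfl ih)

theorem mdeg_det_le [CommRing S] {ι : Type*} [Fintype ι] [DecidableEq ι]
    (M : Matrix ι ι (MvPolynomial σ S)) (b : ι → WithBot ℤ) (h : ∀ k i, mdeg (M k i) ≤ b i) :
    mdeg M.det ≤ ∑ i, b i := by
  rw [Matrix.det_apply]
  refine mdeg_sum_le _ _ fun τ _ => ?_
  calc mdeg (Equiv.Perm.sign τ • ∏ i, M (τ i) i)
      ≤ mdeg (∏ i, M (τ i) i) := mdeg_smul_le _ _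
    _ ≤ ∑ i, mdeg (M (τ i) i) := mdeg_prod_le _ _
    _ ≤ ∑ i, b i := sum_le_sum fun i _ => h _ _

end Degree

theorem IsMonotonous.mdeg_le {F : MvPolynomial (Fin n) R}
    {D : Fin n → MvPolynomial (Fin n ⊕ Fin n) R} (hD : IsMonotonous F D) {c : ℤ}
    (hF : mdeg F ≤ c) (k : Fin n) : mdeg (D k) ≤ ((c - 1 : ℤ) : WithBot ℤ) := by
  have h := (hD k).trans hF
  generalize mdeg (D k) = a at h ⊢
  cases a using WithBot.recBotCoe with
  | bot => exact bot_le
  | coe a =>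
    norm_cast at h ⊢
    omega

theorem Finsupp.degree_fst_add_degree_snd_sumFinsuppAddEquivProdFinsupp {α β : Type*}
    [Fintype α] [Fintype β] (m : α ⊕ β →₀ ℕ) :
    (sumFinsuppAddEquivProdFinsupp m).1.degree + (sumFinsuppAddEquivProdFinsupp m).2.degree =
      m.degree := by
  simp only [degree_eq_sum, Fintype.sum_sum_type, fst_sumFinsuppAddEquivProdFinsupp,
    snd_sumFinsuppAddEquivProdFinsupp]

theorem Finsupp.sumFinsuppAddEquivProdFinsupp_mapDomain_inl {α β : Type*} (a : α →₀ ℕ) :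
    sumFinsuppAddEquivProdFinsupp (a.mapDomain (Sum.inl : α → α ⊕ β)) = (a, 0) := by
  ext x <;> simp [mapDomain_apply Sum.inl_injective, mapDomain_of_notMem_range]

section applyY

variable (L : MvPolynomial (Fin n) R →ₗ[R] R)

def applyYLinearMap : MvPolynomial (Fin n ⊕ Fin n) R →ₗ[R] MvPolynomial (Fin n) R :=
  (basisMonomials _ R).constr R fun m =>
    L (monomial (Finsupp.sumFinsuppAddEquivProdFinsupp m).2 1) •
      monomial (Finsupp.sumFinsuppAddEquivProdFinsupp m).1 1

theorem applyYLinearMap_apply (P : MvPolynomial (Fin n ⊕ Fin n) R) :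
    applyYLinearMap L P = applyY L P := by
  rw [applyYLinearMap, Module.Basis.constr_apply, applyY]
  refine Finset.sum_congr rfl fun m _ => ?_
  change P.coeff m • _ • _ = _
  rw [smul_smul, mul_comm, smul_eq_C_mul]

theorem applyYLinearMap_monomial (w : Fin n ⊕ Fin n →₀ ℕ) (t : R) :
    applyYLinearMap L (monomial w t) =
      (t * L (monomial (Finsupp.sumFinsuppAddEquivProdFinsupp w).2 1)) •
        monomial (Finsupp.sumFinsuppAddEquivProdFinsupp w).1 1 := by
  have h := (basisMonomials (Fin n ⊕ Fin n) R).constr_basis R (fun m =>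
    L (monomial (Finsupp.sumFinsuppAddEquivProdFinsupp m).2 1) •
      monomial (Finsupp.sumFinsuppAddEquivProdFinsupp m).1 (1 : R)) w
  rw [coe_basisMonomials] at h
  rw [← mul_one t, ← smul_eq_mul, ← smul_monomial, map_smul, applyYLinearMap, h, smul_eq_mul,
    mul_one, mul_smul]

theorem applyY_sub (L' : MvPolynomial (Fin n) R →ₗ[R] R) (P : MvPolynomial (Fin n ⊕ Fin n) R) :
    applyY (L' - L) P = applyY L' P - applyY L P := by
  simp only [applyY, ← Finset.sum_sub_distrib, LinearMap.sub_apply, sub_mul, C_sub]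

theorem applyY_toX_mul (A : MvPolynomial (Fin n) R) (P : MvPolynomial (Fin n ⊕ Fin n) R) :
    applyY L (toX A * P) = A * applyY L P := by
  simp only [← applyYLinearMap_apply]
  induction P using MvPolynomial.induction_on' with
  | add P Q hP hQ => rw [mul_add, map_add, map_add, hP, hQ, mul_add]
  | monomial w t =>
    induction A using MvPolynomial.induction_on' with
    | add A B hA hB => rw [map_add, add_mul, map_add, hA, hB, add_mul]
    | monomial a r =>
      rw [toX, rename_monomial, monomial_mul, applyYLinearMap_monomial,
        applyYLinearMap_monomial, map_add,
        Finsupp.sumFinsuppAddEquivProdFinsupp_mapDomain_inl]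
      simp [smul_monomial, monomial_mul, mul_comm, mul_left_comm, mul_assoc]

theorem mdeg_applyY_le {e c : ℤ} (hL : ∀ G, mdeg G ≤ e → L G = 0)
    {P : MvPolynomial (Fin n ⊕ Fin n) R} (hP : mdeg P ≤ c) :
    mdeg (applyY L P) ≤ ((c - e - 1 : ℤ) : WithBot ℤ) := by
  refine mdeg_sum_le _ _ fun m hm => ?_
  have hsplit := Finsupp.degree_fst_add_degree_snd_sumFinsuppAddEquivProdFinsupp m
  by_cases hy : ((Finsupp.sumFinsuppAddEquivProdFinsupp m).2.degree : ℤ) ≤ e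
  · rw [hL _ ((mdeg_monomial_le _ _).trans (WithBot.coe_le_coe.mpr hy)), zero_mul, C_0,
      zero_mul]
    exact bot_le
  · rw [C_mul_monomial]
    refine (mdeg_monomial_le _ _).trans (WithBot.coe_le_coe.mpr ?_)
    have hm := (le_mdeg hm).trans hP
    norm_cast at hm
    omega

theorem applyY_eq_zero_of_mdeg_le {e : ℤ} (hL : ∀ G, mdeg G ≤ e → L G = 0)
    {P : MvPolynomial (Fin n ⊕ Fin n) R} (hP : mdeg P ≤ e) : applyY L P = 0 :=
  eq_zero_of_mdeg_lt_zero <| (mdeg_applyY_le L hL hP).trans_lt <| by norm_cast; omega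

end applyY

section Cofactor

variable {S : Type*} [CommRing S]

def lastRowCofactor (M : Matrix (Fin (n + 1)) (Fin (n + 1)) S) (j : Fin (n + 1)) : S :=
  (-1) ^ (n + (j : ℕ)) * (M.submatrix Fin.castSucc j.succAbove).det

theorem det_eq_sum_mul_lastRowCofactor (M : Matrix (Fin (n + 1)) (Fin (n + 1)) S) :
    M.det = ∑ j, M (Fin.last n) j * lastRowCofactor M j := by
  rw [Matrix.det_succ_row M (Fin.last n)]
  refine Finset.sum_congr rfl fun j _ => ?_
  rw [lastRowCofactor, Fin.succAbove_last, Fin.val_last]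
  ring

theorem mdeg_lastRowCofactor_le {σ : Type*}
    (M : Matrix (Fin (n + 1)) (Fin (n + 1)) (MvPolynomial σ S)) (b : Fin (n + 1) → ℤ)
    (h : ∀ k t, mdeg (M (Fin.castSucc k) t) ≤ b t) (j : Fin (n + 1)) :
    mdeg (lastRowCofactor M j) ≤ ((∑ t, b t - b j : ℤ) : WithBot ℤ) := by
  rw [lastRowCofactor, mdeg_neg_one_pow_mul]
  refine (mdeg_det_le _ (fun i => (b (j.succAbove i) : WithBot ℤ)) fun k i => h _ _).trans_eq ?_
  rw [← WithBot.coe_sum, Fin.sum_univ_succAbove b j, add_sub_cancel_left]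

end Cofactor

section ddetX

variable (f : Fin n → MvPolynomial (Fin n) R)
  (Df : Fin n → Fin n → MvPolynomial (Fin n ⊕ Fin n) R)
  (F : MvPolynomial (Fin n) R) (DF : Fin n → MvPolynomial (Fin n ⊕ Fin n) R)

def ddetMatrix : Matrix (Fin (n + 1)) (Fin (n + 1)) (MvPolynomial (Fin n ⊕ Fin n) R) :=
  Matrix.of fun k i : Fin (n + 1) =>
    if hk : (k : ℕ) < n then
      if hi : (i : ℕ) < n then Df ⟨i, hi⟩ ⟨k, hk⟩ else DF ⟨k, hk⟩
    else
      if hi : (i : ℕ) < n then toX (f ⟨i, hi⟩) else toX F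

theorem applyY_ddetX (L : MvPolynomial (Fin n) R →ₗ[R] R) :
    applyY L (ddetX f Df F DF) =
      ∑ i, f i * applyY L (lastRowCofactor (ddetMatrix f Df F DF) i.castSucc) +
        F * applyY L (lastRowCofactor (ddetMatrix f Df F DF) (Fin.last n)) := by
  rw [← applyYLinearMap_apply, ddetX, ← ddetMatrix, det_eq_sum_mul_lastRowCofactor, map_sum,
    Fin.sum_univ_castSucc]
  simp [ddetMatrix, applyYLinearMap_apply, applyY_toX_mul]

def ddetColumnBound (d : ℤ) : Fin (n + 1) → ℤ :=
  Fin.lastCases (d - 1) fun i => ((f i).totalDegree : ℤ) - 1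

theorem sum_ddetColumnBound (d : ℤ) : ∑ t, ddetColumnBound f d t = deltaF f + d - 1 := by
  simp only [ddetColumnBound, Fin.sum_univ_castSucc, Fin.lastCases_castSucc, Fin.lastCases_last,
    deltaF]
  ring

variable {f Df F DF}

theorem mdeg_ddetMatrix_le (hDf : ∀ i, IsMonotonous (f i) (Df i)) (hDF : IsMonotonous F DF)
    {d : ℤ} (hF : mdeg F ≤ d) (k : Fin n) (t : Fin (n + 1)) :
    mdeg (ddetMatrix f Df F DF k.castSucc t) ≤ ddetColumnBound f d t := by
  cases t using Fin.lastCases with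
  | last => simpa [ddetMatrix, ddetColumnBound] using hDF.mdeg_le hF k
  | cast i => simpa [ddetMatrix, ddetColumnBound] using (hDf i).mdeg_le (mdeg_le_totalDegree _) k

end ddetX

theorem applyY_ddetX_sub_of_L_general {R : Type*} [CommRing R] {n : ℕ}
    (f : Fin n → MvPolynomial (Fin n) R)
    (δ : ℤ) (hδ : 0 ≤ δ) (L L' : MvPolynomial (Fin n) R →ₗ[R] R)
    (hagree : ∀ G : MvPolynomial (Fin n) R,
      mdeg G ≤ ((deltaF f + δ : ℤ) : WithBot ℤ) → L' G = L G)
    (d : ℤ) (F : MvPolynomial (Fin n) R) (hF : mdeg F ≤ (d : WithBot ℤ))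
    (Df : Fin n → Fin n → MvPolynomial (Fin n ⊕ Fin n) R)
    (hDf : ∀ i, IsDiffDeriv (f i) (Df i) ∧ IsMonotonous (f i) (Df i))
    (DF : Fin n → MvPolynomial (Fin n ⊕ Fin n) R)
    (hDF : IsDiffDeriv F DF ∧ IsMonotonous F DF) :
    applyY L' (ddetX f Df F DF) - applyY L (ddetX f Df F DF) ∈
      boundedSpan f ((d - δ - 1 : ℤ) : WithBot ℤ) := by
  set L₀ := L' - L
  have hL₀ : ∀ G, mdeg G ≤ ((deltaF f + δ : ℤ) : WithBot ℤ) → L₀ G = 0 := fun G hG => by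
    simp [L₀, hagree G hG]
  have hcof := mdeg_lastRowCofactor_le _ _ (mdeg_ddetMatrix_le (fun i => (hDf i).2) hDF.2 hF)
  simp only [sum_ddetColumnBound] at hcof
  have hg (i : Fin n) :
      mdeg (applyY L₀ (lastRowCofactor (ddetMatrix f Df F DF) i.castSucc)) ≤
        ((d - δ - 1 - (f i).totalDegree : ℤ) : WithBot ℤ) :=
    (mdeg_applyY_le L₀ hL₀ (hcof _)).trans_eq <| by
      simp only [ddetColumnBound, Fin.lastCases_castSucc]
      congr 1
      ring
  refine ⟨fun i => applyY L₀ (lastRowCofactor (ddetMatrix f Df F DF) i.castSucc), ?_,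
    fun i => (add_le_add (mdeg_le_totalDegree _) (hg i)).trans_eq (by norm_cast; ring)⟩
  rw [← applyY_sub, applyY_ddetX, applyY_eq_zero_of_mdeg_le L₀ hL₀ ((hcof _).trans ?_),
    mul_zero, add_zero]
  exact WithBot.coe_le_coe.mpr (by simp only [ddetColumnBound, Fin.lastCases_last]; omega)

/-- Theorem 2.4: `H(x)` is determined up to an addend in `(f)^{≤ d - δ - 1}_x`
independently of the determination of `L` outside `R[x^{≤ δ_f + δ}]`. -/
theorem applyY_ddetX_sub_of_L {R : Type*} [CommRing R] {n : ℕ}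
    (f : Fin n → MvPolynomial (Fin n) R) (hf : ∀ i, (1 : WithBot ℤ) ≤ mdeg (f i))
    (δ : ℤ) (hδ : 0 ≤ δ) (L L' : MvPolynomial (Fin n) R →ₗ[R] R)
    (hL : Annuls L (boundedSpan f ((deltaF f + δ : ℤ) : WithBot ℤ)))
    (hL' : Annuls L' (boundedSpan f ((deltaF f + δ : ℤ) : WithBot ℤ)))
    (hagree : ∀ G : MvPolynomial (Fin n) R,
      mdeg G ≤ ((deltaF f + δ : ℤ) : WithBot ℤ) → L' G = L G)
    (d : ℤ) (F : MvPolynomial (Fin n) R) (hF : mdeg F ≤ (d : WithBot ℤ))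
    (Df : Fin n → Fin n → MvPolynomial (Fin n ⊕ Fin n) R)
    (hDf : ∀ i, IsDiffDeriv (f i) (Df i) ∧ IsMonotonous (f i) (Df i))
    (DF : Fin n → MvPolynomial (Fin n ⊕ Fin n) R)
    (hDF : IsDiffDeriv F DF ∧ IsMonotonous F DF) :
    applyY L' (ddetX f Df F DF) - applyY L (ddetX f Df F DF) ∈
      boundedSpan f ((d - δ - 1 : ℤ) : WithBot ℤ) :=
  applyY_ddetX_sub_of_L_general f δ hδ L L' hagree d F hF Df hDf DF hDF

end
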